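/- arXiv:1602.00257 — 3 statements merged into one kernel-verified Lean document; each statement's English description precedes it below -/
import Mathlib

section
/- Let g be the heat kernel in dimension d, and let 0 < p < 1 + 2/d and a ≥ 0. Then for all t > 0 and x ∈ ℝ^d, the integral ∫₀^t ∫_{ℝ^d} g(t-s, x-y)^p |y|^a dy ds is finite. -/
open MeasureTheory Real Module

/-!
After the substitution `τ = t - s`, the heat kernel satisfies
`g(τ, z)^p = (4πτ)^{-dp/2} exp(-p|z|²/(4τ))`. The weight
`|y|^a ≤ (|x| + |x - y|)^a` grows at most exponentially in `|x - y|`, so half of the Gaussian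
absorbs it, and the Gaussian integral of the other half contributes `τ^{d/2}`. Hence the inner
integral is `O(τ^{d(1-p)/2})` uniformly for `τ ≤ t`, and this is integrable near `τ = 0` exactly
when `d(p - 1) < 2`, i.e. `p < 1 + 2/d`.
-/

lemma add_rpow_le_mul_exp {a c r : ℝ} (ha : 0 ≤ a) (hc : 0 ≤ c) (hr : 0 ≤ r) :
    (c + r) ^ a ≤ (c + 1) ^ a * exp (a * r) := by
  calc (c + r) ^ a ≤ ((c + 1) * exp r) ^ a := by
        gcongr
        nlinarith [add_one_le_exp r]
    _ = (c + 1) ^ a * exp (a * r) := by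
        rw [mul_rpow (by positivity) (exp_pos r).le, ← exp_mul, mul_comm r]

lemma add_rpow_mul_exp_neg_mul_sq_le {a b c r : ℝ} (ha : 0 ≤ a) (hb : 0 < b) (hc : 0 ≤ c)
    (hr : 0 ≤ r) :
    (c + r) ^ a * exp (-b * r ^ 2)
      ≤ (c + 1) ^ a * exp (a ^ 2 / (2 * b)) * exp (-(b / 2) * r ^ 2) := by
  have hsq : a * r - b * r ^ 2 ≤ a ^ 2 / (2 * b) + -(b / 2) * r ^ 2 := by
    rw [← sub_nonneg]
    have : a ^ 2 / (2 * b) + -(b / 2) * r ^ 2 - (a * r - b * r ^ 2)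
        = (b * r - a) ^ 2 / (2 * b) := by
      field_simp
      ring
    rw [this]
    positivity
  calc (c + r) ^ a * exp (-b * r ^ 2) ≤ (c + 1) ^ a * exp (a * r) * exp (-b * r ^ 2) := by
        gcongr
        exact add_rpow_le_mul_exp ha hc hr
    _ = (c + 1) ^ a * exp (a * r - b * r ^ 2) := by
        rw [mul_assoc, ← exp_add]
        ring_nf
    _ ≤ (c + 1) ^ a * exp (a ^ 2 / (2 * b) + -(b / 2) * r ^ 2) := by gcongr
    _ = (c + 1) ^ a * exp (a ^ 2 / (2 * b)) * exp (-(b / 2) * r ^ 2) := by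
        rw [exp_add, mul_assoc]

section InnerProductSpace

variable {V : Type*} [NormedAddCommGroup V] [InnerProductSpace ℝ V]

variable (V) in
noncomputable def heatKernel (t : ℝ) (x : V) : ℝ :=
  if 0 < t then (4 * π * t) ^ (-(finrank ℝ V : ℝ) / 2) * exp (-‖x‖ ^ 2 / (4 * t)) else 0

lemma heatKernel_rpow {τ : ℝ} (hτ : 0 < τ) (p : ℝ) (z : V) :
    heatKernel V τ z ^ p
      = (4 * π * τ) ^ (-(finrank ℝ V : ℝ) / 2 * p) * exp (-(p / (4 * τ)) * ‖z‖ ^ 2) := by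
  rw [heatKernel, if_pos hτ, mul_rpow (by positivity) (exp_pos _).le, ← rpow_mul (by positivity),
    ← exp_mul]
  congr 2
  ring

variable [FiniteDimensional ℝ V] [MeasurableSpace V] [BorelSpace V]

lemma integrable_exp_neg_mul_sq_norm {β : ℝ} (hβ : 0 < β) :
    Integrable (fun y : V => exp (-β * ‖y‖ ^ 2)) := by
  refine (GaussianFourier.integrable_cexp_neg_mul_sq_norm_add (b := β) (by simpa using hβ) 0 0
    ).norm.congr (.of_forall fun y => ?_)
  simp [Complex.norm_exp, ← Complex.ofReal_pow]

lemma lintegral_exp_neg_mul_norm_sub_sq {β : ℝ} (hβ : 0 < β) (x : V) :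
    ∫⁻ y : V, ENNReal.ofReal (exp (-β * ‖x - y‖ ^ 2))
      = ENNReal.ofReal ((π / β) ^ ((finrank ℝ V : ℝ) / 2)) := by
  simp_rw [norm_sub_rev x]
  rw [lintegral_sub_right_eq_self (fun y => ENNReal.ofReal (exp (-β * ‖y‖ ^ 2))) x,
    ← ofReal_integral_eq_lintegral_ofReal (integrable_exp_neg_mul_sq_norm hβ)
      (.of_forall fun _ => (exp_pos _).le),
    GaussianFourier.integral_rexp_neg_mul_sq_norm hβ]

lemma lintegral_exp_neg_mul_norm_sub_sq_mul_norm_rpow_le {β a : ℝ} (hβ : 0 < β) (ha : 0 ≤ a)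
    (x : V) :
    ∫⁻ y : V, ENNReal.ofReal (exp (-β * ‖x - y‖ ^ 2) * ‖y‖ ^ a)
      ≤ ENNReal.ofReal ((‖x‖ + 1) ^ a * exp (a ^ 2 / (2 * β)) *
          (2 * π / β) ^ ((finrank ℝ V : ℝ) / 2)) := by
  set K := (‖x‖ + 1) ^ a * exp (a ^ 2 / (2 * β))
  have hK : 0 ≤ K := by positivity
  have hpointwise (y : V) :
      exp (-β * ‖x - y‖ ^ 2) * ‖y‖ ^ a ≤ K * exp (-(β / 2) * ‖x - y‖ ^ 2) := by
    have hy : ‖y‖ ≤ ‖x‖ + ‖x - y‖ := by simpa using norm_sub_le x (x - y)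
    calc exp (-β * ‖x - y‖ ^ 2) * ‖y‖ ^ a
        ≤ (‖x‖ + ‖x - y‖) ^ a * exp (-β * ‖x - y‖ ^ 2) := by
          rw [mul_comm]; gcongr
      _ ≤ K * exp (-(β / 2) * ‖x - y‖ ^ 2) :=
          add_rpow_mul_exp_neg_mul_sq_le ha hβ (norm_nonneg x) (norm_nonneg _)
  calc ∫⁻ y : V, ENNReal.ofReal (exp (-β * ‖x - y‖ ^ 2) * ‖y‖ ^ a)
      ≤ ∫⁻ y : V, ENNReal.ofReal K * ENNReal.ofReal (exp (-(β / 2) * ‖x - y‖ ^ 2)) :=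
        lintegral_mono fun y => (ENNReal.ofReal_le_ofReal (hpointwise y)).trans_eq
          (ENNReal.ofReal_mul hK)
    _ = ENNReal.ofReal (K * (2 * π / β) ^ ((finrank ℝ V : ℝ) / 2)) := by
        rw [lintegral_const_mul' _ _ ENNReal.ofReal_ne_top,
          lintegral_exp_neg_mul_norm_sub_sq (by positivity), ← ENNReal.ofReal_mul hK,
          div_div_eq_mul_div, mul_comm π]

lemma lintegral_heatKernel_rpow_mul_norm_rpow_le {p a τ : ℝ} (hp : 0 < p) (ha : 0 ≤ a)
    (hτ : 0 < τ) (x : V) :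
    ∫⁻ y : V, ENNReal.ofReal (heatKernel V τ (x - y) ^ p * ‖y‖ ^ a)
      ≤ ENNReal.ofReal ((4 * π) ^ (-(finrank ℝ V : ℝ) / 2 * p) *
          (8 * π / p) ^ ((finrank ℝ V : ℝ) / 2) * (‖x‖ + 1) ^ a * exp (2 * a ^ 2 * τ / p) *
          τ ^ ((finrank ℝ V : ℝ) / 2 * (1 - p))) := by
  set d : ℝ := (finrank ℝ V : ℝ)
  have hβ : 0 < p / (4 * τ) := by positivity
  calc ∫⁻ y : V, ENNReal.ofReal (heatKernel V τ (x - y) ^ p * ‖y‖ ^ a)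
      = ENNReal.ofReal ((4 * π * τ) ^ (-d / 2 * p)) *
          ∫⁻ y : V, ENNReal.ofReal (exp (-(p / (4 * τ)) * ‖x - y‖ ^ 2) * ‖y‖ ^ a) := by
        rw [← lintegral_const_mul' _ _ ENNReal.ofReal_ne_top]
        congr with y
        rw [heatKernel_rpow hτ, mul_assoc, ENNReal.ofReal_mul (by positivity)]
    _ ≤ ENNReal.ofReal ((4 * π * τ) ^ (-d / 2 * p)) *
          ENNReal.ofReal ((‖x‖ + 1) ^ a * exp (a ^ 2 / (2 * (p / (4 * τ)))) *
            (2 * π / (p / (4 * τ))) ^ (d / 2)) := by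
        gcongr
        exact lintegral_exp_neg_mul_norm_sub_sq_mul_norm_rpow_le hβ ha x
    _ = _ := by
        rw [← ENNReal.ofReal_mul (by positivity)]
        congr 1
        have hexp : a ^ 2 / (2 * (p / (4 * τ))) = 2 * a ^ 2 * τ / p := by field_simp; ring
        have hvar : 2 * π / (p / (4 * τ)) = 8 * π / p * τ := by field_simp; ring
        rw [hexp, hvar, mul_rpow (by positivity) hτ.le, mul_rpow (by positivity) hτ.le,
          show d / 2 * (1 - p) = -d / 2 * p + d / 2 by ring, rpow_add hτ]
        ring

end InnerProductSpace

lemma lintegral_Ioo_ofReal_mul_sub_rpow_lt_top {e t : ℝ} (he : -1 < e) (ht : 0 ≤ t) (C : ℝ) :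
    ∫⁻ s in Set.Ioo 0 t, ENNReal.ofReal (C * (t - s) ^ e) < ⊤ := by
  have h : IntervalIntegrable (fun s => (t - s) ^ e) volume 0 t := by
    simpa using
      ((intervalIntegral.intervalIntegrable_rpow' he (a := 0) (b := t)).comp_sub_left t).symm
  exact (((intervalIntegrable_iff_integrableOn_Ioo_of_le ht).mp h).const_mul C).lintegral_lt_top

theorem heat_kernel_power_poly_integrable_general (d : ℕ)
    (g : ℝ → EuclideanSpace ℝ (Fin d) → ℝ)
    (hg : ∀ t x, g t x = if 0 < t then (4 * π * t) ^ (-(d : ℝ) / 2) * exp (-‖x‖ ^ 2 / (4 * t))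
      else 0)
    (p : ℝ) (hp : 0 < p) (hp' : p < 1 + 2 / d) (a : ℝ) (ha : 0 ≤ a)
    (t : ℝ) (ht : 0 < t) (x : EuclideanSpace ℝ (Fin d)) :
    ∫⁻ s in Set.Ioc (0 : ℝ) t, ∫⁻ y : EuclideanSpace ℝ (Fin d),
      ENNReal.ofReal (g (t - s) (x - y) ^ p * ‖y‖ ^ a) < ⊤ := by
  obtain rfl : g = heatKernel (EuclideanSpace ℝ (Fin d)) := by
    ext s y
    rw [hg, heatKernel, finrank_euclideanSpace_fin]
  have he : -1 < (d : ℝ) / 2 * (1 - p) := by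
    rcases (Nat.cast_nonneg d : (0 : ℝ) ≤ d).eq_or_lt with hd | hd
    · simp [← hd]
    · nlinarith [(lt_div_iff₀ hd).1 (by linarith : p - 1 < 2 / d)]
  set C := (4 * π) ^ (-(d : ℝ) / 2 * p) * (8 * π / p) ^ ((d : ℝ) / 2) * (‖x‖ + 1) ^ a *
    exp (2 * a ^ 2 * t / p)
  calc _ = ∫⁻ s in Set.Ioo 0 t, ∫⁻ y : EuclideanSpace ℝ (Fin d),
        ENNReal.ofReal (heatKernel _ (t - s) (x - y) ^ p * ‖y‖ ^ a) :=
        setLIntegral_congr Ioo_ae_eq_Ioc.symm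
    _ ≤ ∫⁻ s in Set.Ioo 0 t, ENNReal.ofReal (C * (t - s) ^ ((d : ℝ) / 2 * (1 - p))) := by
        refine setLIntegral_mono' measurableSet_Ioo fun s ⟨_, hst⟩ => ?_
        refine (lintegral_heatKernel_rpow_mul_norm_rpow_le hp ha (sub_pos.2 hst) x).trans ?_
        rw [finrank_euclideanSpace_fin]
        unfold C
        gcongr
        linarith
    _ < ⊤ := lintegral_Ioo_ofReal_mul_sub_rpow_lt_top he ht.le C

/-- For `0 < p < 1 + 2/d` and `a ≥ 0`, the integral
`∫₀ᵗ ∫_{ℝ^d} g(t-s, x-y)^p |y|^a dy ds` is finite. -/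
theorem heat_kernel_power_poly_integrable (d : ℕ) (hd : 1 ≤ d)
    (g : ℝ → EuclideanSpace ℝ (Fin d) → ℝ)
    (hg : ∀ t x, g t x = if 0 < t then (4 * π * t) ^ (-(d : ℝ) / 2) * exp (-‖x‖ ^ 2 / (4 * t))
      else 0)
    (p : ℝ) (hp : 0 < p) (hp' : p < 1 + 2 / d) (a : ℝ) (ha : 0 ≤ a)
    (t : ℝ) (ht : 0 < t) (x : EuclideanSpace ℝ (Fin d)) :
    ∫⁻ s in Set.Ioc (0 : ℝ) t, ∫⁻ y : EuclideanSpace ℝ (Fin d),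
      ENNReal.ofReal (g (t - s) (x - y) ^ p * ‖y‖ ^ a) < ⊤ :=
  heat_kernel_power_poly_integrable_general d g hg p hp hp' a ha t ht x
end

section
/- Let α, β, C > 0 with β(α) := αη(p-q)/2 where η(p-q)/2 < 1 - d(p-1)/2 =: κ and κ > 0. Then the sequence a_n := Cⁿ · Γ((1 + nη(p-q))/2) · Γ(κ)ⁿ / Γ(1 + κn) satisfies ∑_{n=1}^∞ a_n^{1/r} < ∞ for every r ≥ 1. In particular a_n → 0. -/
/-!
Write `s = η(p-q)/2`. The ratio `a (n+1) / a n` is `C Γ(κ) · Γ(x + s)/Γ(x) · Γ(y)/Γ(y + κ)` with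
`x = 1/2 + s n` and `y = 1 + κ n`. Log-convexity of `Γ` gives the Gautschi-type bounds
`Γ(x + s)/Γ(x) ≤ (x + s)^s` and `Γ(y)/Γ(y + κ) ≤ 2 y^(-κ)`, so the ratio is `O(n^(s-κ))` and tends
to `0` because `s < κ`. The ratio test then gives summability of every power `a_n^(1/r)`, and
`a_n → 0` follows from the case `r = 1`.
-/

open Real Set Filter Topology

theorem forall_nonneg_of_forall_Icc_of_add_one {P : ℝ → Prop}
    (hP : ∀ t ∈ Icc (0 : ℝ) 1, P t)
    (hstep : ∀ t, 0 ≤ t → P t → P (t + 1)) {t : ℝ} (ht : 0 ≤ t) : P t := by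
  suffices h : ∀ n : ℕ, ∀ t : ℝ, 0 ≤ t → t ≤ n + 1 → P t from
    h ⌈t⌉₊ t ht (by linarith [Nat.le_ceil t])
  intro n
  induction n with
  | zero => exact fun t ht ht1 => hP t ⟨ht, by simpa using ht1⟩
  | succ n ih =>
    intro t ht htn
    rcases le_total t 1 with ht1 | ht1
    · exact hP t ⟨ht, ht1⟩
    · have ih' := ih (t - 1) (by linarith) (by push_cast at htn; linarith)
      simpa using hstep (t - 1) (by linarith) ih'

theorem summable_rpow_of_tendsto_div_zero {f : ℕ → ℝ} (hf : ∀ n, 0 < f n)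
    (h : Tendsto (fun n => f (n + 1) / f n) atTop (𝓝 0)) {e : ℝ} (he : 0 < e) :
    Summable fun n => f n ^ e := by
  refine summable_of_ratio_test_tendsto_lt_one zero_lt_one
    (Eventually.of_forall fun n => (rpow_pos_of_pos (hf n) e).ne') ?_
  have hratio : ∀ n, ‖f (n + 1) ^ e‖ / ‖f n ^ e‖ = (f (n + 1) / f n) ^ e := fun n => by
    rw [norm_of_nonneg (rpow_nonneg (hf _).le e), norm_of_nonneg (rpow_nonneg (hf _).le e),
      div_rpow (hf _).le (hf _).le]
  simpa only [hratio, zero_rpow he.ne'] using h.rpow_const (Or.inr he.le)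

namespace Real

theorem Gamma_add_le_Gamma_mul_rpow_of_le_one {x s : ℝ} (hx : 0 < x) (hs : 0 ≤ s)
    (hs1 : s ≤ 1) :
    Gamma (x + s) ≤ Gamma x * x ^ s := by
  rcases hs.eq_or_lt with rfl | hs
  · simp
  rcases hs1.eq_or_lt with rfl | hs1
  · rw [Gamma_add_one hx.ne', rpow_one, mul_comm]
  -- log-convexity between `x` and `x + 1`, with `Γ(x + 1) = x Γ(x)`
  have h := Gamma_mul_add_mul_le_rpow_Gamma_mul_rpow_Gamma (s := x) (t := x + 1) hx
    (by linarith) (a := 1 - s) (b := s) (by linarith) hs (by ring)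
  rw [show (1 - s) * x + s * (x + 1) = x + s by ring, Gamma_add_one hx.ne',
    mul_rpow hx.le (Gamma_pos_of_pos hx).le] at h
  calc Gamma (x + s) ≤ Gamma x ^ (1 - s) * (x ^ s * Gamma x ^ s) := h
    _ = Gamma x * x ^ s := by
      rw [mul_comm (x ^ s), ← mul_assoc, ← rpow_add (Gamma_pos_of_pos hx), sub_add_cancel,
        rpow_one]

theorem Gamma_add_le_Gamma_mul_rpow {x s : ℝ} (hx : 0 < x) (hs : 0 ≤ s) :
    Gamma (x + s) ≤ Gamma x * (x + s) ^ s := by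
  refine forall_nonneg_of_forall_Icc_of_add_one
    (P := fun s => ∀ x : ℝ, 0 < x → Gamma (x + s) ≤ Gamma x * (x + s) ^ s)
    (fun s hs x hx => ?_) (fun s hs ih x hx => ?_) hs x hx
  · exact (Gamma_add_le_Gamma_mul_rpow_of_le_one hx hs.1 hs.2).trans <|
      mul_le_mul_of_nonneg_left (rpow_le_rpow hx.le (by linarith [hs.1]) hs.1)
        (Gamma_pos_of_pos hx).le
  · have hxs : 0 < x + s := by linarith
    calc Gamma (x + (s + 1)) = (x + s) * Gamma (x + s) := by
          rw [← add_assoc, Gamma_add_one hxs.ne']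
      _ ≤ (x + s) * (Gamma x * (x + s) ^ s) := mul_le_mul_of_nonneg_left (ih x hx) hxs.le
      _ = Gamma x * (x + s) ^ (s + 1) := by rw [rpow_add_one hxs.ne']; ring
      _ ≤ Gamma x * (x + (s + 1)) ^ (s + 1) :=
          mul_le_mul_of_nonneg_left (rpow_le_rpow hxs.le (by linarith) (by linarith))
            (Gamma_pos_of_pos hx).le

theorem Gamma_mul_rpow_le_two_mul_Gamma_add {y t : ℝ} (hy : 1 ≤ y) (ht : 0 ≤ t) :
    Gamma y * y ^ t ≤ 2 * Gamma (y + t) := by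
  refine forall_nonneg_of_forall_Icc_of_add_one
    (P := fun t => ∀ y : ℝ, 1 ≤ y → Gamma y * y ^ t ≤ 2 * Gamma (y + t))
    (fun t ht y hy => ?_) (fun t ht ih y hy => ?_) ht y hy
  · obtain ⟨ht, ht1⟩ := ht
    have hyt : 0 < y + t := by linarith
    -- `y Γ(y) = Γ(y + 1) ≤ Γ(y + t) (y + t)^(1 - t)`: the upper bound, started at `y + t`
    have h := Gamma_add_le_Gamma_mul_rpow_of_le_one hyt (s := 1 - t) (by linarith) (by linarith)
    rw [show y + t + (1 - t) = y + 1 by ring, Gamma_add_one (by linarith)] at h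
    have hpow : y ^ t * (y + t) ^ (1 - t) ≤ 2 * y := by
      calc y ^ t * (y + t) ^ (1 - t) ≤ (y + 1) ^ t * (y + 1) ^ (1 - t) := by gcongr; linarith
        _ = y + 1 := by rw [← rpow_add (by linarith), add_sub_cancel, rpow_one]
        _ ≤ 2 * y := by linarith
    refine le_of_mul_le_mul_right ?_ (rpow_pos_of_pos hyt (1 - t))
    calc Gamma y * y ^ t * (y + t) ^ (1 - t) = Gamma y * (y ^ t * (y + t) ^ (1 - t)) := by ring
      _ ≤ Gamma y * (2 * y) :=
          mul_le_mul_of_nonneg_left hpow (Gamma_pos_of_pos (by linarith)).le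
      _ = 2 * (y * Gamma y) := by ring
      _ ≤ 2 * Gamma (y + t) * (y + t) ^ (1 - t) := by linarith
  · have hy0 : 0 < y := by linarith
    calc Gamma y * y ^ (t + 1) = y * (Gamma y * y ^ t) := by rw [rpow_add_one hy0.ne']; ring
      _ ≤ (y + t) * (2 * Gamma (y + t)) :=
          mul_le_mul (by linarith) (ih y hy) (by positivity) (by linarith)
      _ = 2 * Gamma (y + (t + 1)) := by rw [← add_assoc, Gamma_add_one (by linarith)]; ring

theorem Gamma_add_mul_succ_div_Gamma_le {x₀ s : ℝ} (hx₀ : 0 < x₀) (hs : 0 ≤ s) (n : ℕ) :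
    Gamma (x₀ + s * (n + 1)) / Gamma (x₀ + s * n) ≤ (x₀ + s) ^ s * ((n : ℝ) + 1) ^ s := by
  have hx : 0 < x₀ + s * n := by positivity
  rw [div_le_iff₀ (Gamma_pos_of_pos hx), ← mul_rpow (by positivity) (by positivity)]
  calc Gamma (x₀ + s * (n + 1)) = Gamma (x₀ + s * n + s) := by ring_nf
    _ ≤ Gamma (x₀ + s * n) * (x₀ + s * n + s) ^ s := Gamma_add_le_Gamma_mul_rpow hx hs
    _ ≤ Gamma (x₀ + s * n) * ((x₀ + s) * (n + 1)) ^ s := by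
        gcongr
        nlinarith [(n.cast_nonneg : (0 : ℝ) ≤ n)]
    _ = _ := mul_comm _ _

theorem Gamma_div_Gamma_add_mul_succ_le {y₀ κ : ℝ} (hy₀ : 1 ≤ y₀) (hκ : 0 < κ) (n : ℕ) :
    Gamma (y₀ + κ * n) / Gamma (y₀ + κ * (n + 1))
      ≤ 2 * min y₀ κ ^ (-κ) * ((n : ℝ) + 1) ^ (-κ) := by
  have hm : 0 < min y₀ κ := lt_min (by linarith) hκ
  have hκn : 0 ≤ κ * n := by positivity
  have hy : 1 ≤ y₀ + κ * n := by linarith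
  have hmy : min y₀ κ * (n + 1) ≤ y₀ + κ * n := by
    nlinarith [min_le_left y₀ κ, min_le_right y₀ κ, (n.cast_nonneg : (0 : ℝ) ≤ n)]
  have hY : 0 < y₀ + κ * n := by linarith
  have h := Gamma_mul_rpow_le_two_mul_Gamma_add hy hκ.le
  rw [← mul_le_mul_iff_of_pos_right (rpow_pos_of_pos hY (-κ)), mul_assoc,
    ← rpow_add hY, add_neg_cancel, rpow_zero, mul_one] at h
  have hY' : 0 < y₀ + κ * (n + 1) := by linarith [mul_add_one κ (n : ℝ)]
  rw [div_le_iff₀ (Gamma_pos_of_pos hY')]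
  calc Gamma (y₀ + κ * n) ≤ 2 * Gamma (y₀ + κ * n + κ) * (y₀ + κ * n) ^ (-κ) := h
    _ ≤ 2 * Gamma (y₀ + κ * n + κ) * (min y₀ κ * (n + 1)) ^ (-κ) :=
        mul_le_mul_of_nonneg_left (rpow_le_rpow_of_nonpos (by positivity) hmy (by linarith))
          (mul_nonneg zero_le_two (Gamma_pos_of_pos (by linarith)).le)
    _ = _ := by rw [mul_rpow hm.le (by positivity)]; ring_nf

theorem tendsto_Gamma_div_Gamma_mul_Gamma_div_Gamma {x₀ y₀ s κ : ℝ} (hx₀ : 0 < x₀)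
    (hy₀ : 1 ≤ y₀) (hs : 0 ≤ s) (hsκ : s < κ) :
    Tendsto (fun n : ℕ => Gamma (x₀ + s * (n + 1)) / Gamma (x₀ + s * n) *
      (Gamma (y₀ + κ * n) / Gamma (y₀ + κ * (n + 1)))) atTop (𝓝 0) := by
  have hκ : 0 < κ := hs.trans_lt hsκ
  have hdecay : Tendsto (fun n : ℕ => ((n : ℝ) + 1) ^ (-(κ - s))) atTop (𝓝 0) :=
    (tendsto_rpow_neg_atTop (by linarith)).comp
      (tendsto_atTop_add_const_right _ 1 tendsto_natCast_atTop_atTop)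
  refine squeeze_zero (fun n => by positivity) (fun n => mul_le_mul
    (Gamma_add_mul_succ_div_Gamma_le hx₀ hs n) (Gamma_div_Gamma_add_mul_succ_le hy₀ hκ n)
    (by positivity) (by positivity)) ?_
  have := hdecay.const_mul ((x₀ + s) ^ s * (2 * min y₀ κ ^ (-κ)))
  rw [mul_zero] at this
  refine this.congr fun n => ?_
  rw [neg_sub, sub_eq_add_neg, rpow_add (by positivity)]
  ring

theorem tendsto_succ_div_pow_mul_Gamma_div_Gamma {c x₀ y₀ s κ : ℝ} (hc : c ≠ 0) (hx₀ : 0 < x₀)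
    (hy₀ : 1 ≤ y₀) (hs : 0 ≤ s) (hsκ : s < κ) {b : ℕ → ℝ}
    (hb : ∀ n : ℕ, b n = c ^ n * Gamma (x₀ + s * n) / Gamma (y₀ + κ * n)) :
    Tendsto (fun n => b (n + 1) / b n) atTop (𝓝 0) := by
  have hratio : ∀ n : ℕ, b (n + 1) / b n =
      c * (Gamma (x₀ + s * (n + 1)) / Gamma (x₀ + s * n) *
        (Gamma (y₀ + κ * n) / Gamma (y₀ + κ * (n + 1)))) := fun n => by
    have hx : Gamma (x₀ + s * n) ≠ 0 := (Gamma_pos_of_pos (by positivity)).ne'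
    have hy : Gamma (y₀ + κ * n) ≠ 0 :=
      (Gamma_pos_of_pos (by nlinarith [hs.trans_lt hsκ, n.cast_nonneg (α := ℝ)])).ne'
    rw [hb, hb]
    push_cast
    field_simp
    ring
  simpa only [hratio, mul_zero] using
    (tendsto_Gamma_div_Gamma_mul_Gamma_div_Gamma hx₀ hy₀ hs hsκ).const_mul c

end Real

theorem picard_bound_summable_general (η p q C : ℝ)
    (hη : 0 < η) (hC : 0 < C) (hpq : q ≤ p)
    (κ : ℝ) (hκ : 0 < κ)
    (hsmall : η * (p - q) / 2 < κ)
    (a : ℕ → ℝ)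
    (ha : ∀ n : ℕ, a n = C ^ n * Gamma ((1 + n * η * (p - q)) / 2) * Gamma κ ^ n
        / Gamma (1 + κ * n)) :
    (∀ r : ℝ, 1 ≤ r → Summable fun n : ℕ => a (n + 1) ^ (1 / r)) ∧
      Filter.Tendsto a Filter.atTop (nhds 0) := by
  set s := η * (p - q) / 2
  have hs : 0 ≤ s := by have := sub_nonneg.2 hpq; positivity
  have hCΓ : 0 < C * Gamma κ := mul_pos hC (Gamma_pos_of_pos hκ)
  have ha' : ∀ n : ℕ, a n = (C * Gamma κ) ^ n * Gamma (1 / 2 + s * n) / Gamma (1 + κ * n) :=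
    fun n => by rw [ha, mul_pow, show (1 + n * η * (p - q)) / 2 = 1 / 2 + s * n by ring]; ring
  have hpos : ∀ n, 0 < a n := fun n => by
    rw [ha']
    exact div_pos (mul_pos (pow_pos hCΓ n) (Gamma_pos_of_pos (by positivity)))
      (Gamma_pos_of_pos (by positivity))
  have hratio :=
    tendsto_succ_div_pow_mul_Gamma_div_Gamma hCΓ.ne' one_half_pos le_rfl hs hsmall ha'
  refine ⟨fun r hr => summable_rpow_of_tendsto_div_zero (fun n => hpos (n + 1))
    (hratio.comp (tendsto_add_atTop_nat 1)) (by positivity), ?_⟩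
  simpa only [rpow_one] using
    (summable_rpow_of_tendsto_div_zero hpos hratio one_pos).tendsto_atTop_zero

/-- Summability of the Picard iteration bounds: with `κ = 1 - d(p-1)/2 > 0` and
`η(p-q)/2 < κ`, the sequence `a_n = Cⁿ Γ((1+nη(p-q))/2) Γ(κ)ⁿ / Γ(1+κn)`
satisfies `∑ a_n^{1/r} < ∞` for every `r ≥ 1`; in particular `a_n → 0`. -/
theorem picard_bound_summable (d : ℕ) (hd : 1 ≤ d) (η p q C : ℝ)
    (hη : 0 < η) (hp : 0 < p) (hq : 0 < q) (hC : 0 < C) (hpq : q ≤ p)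
    (κ : ℝ) (hκdef : κ = 1 - d * (p - 1) / 2) (hκ : 0 < κ)
    (hsmall : η * (p - q) / 2 < κ)
    (a : ℕ → ℝ)
    (ha : ∀ n : ℕ, a n = C ^ n * Gamma ((1 + n * η * (p - q)) / 2) * Gamma κ ^ n
        / Gamma (1 + κ * n)) :
    (∀ r : ℝ, 1 ≤ r → Summable fun n : ℕ => a (n + 1) ^ (1 / r)) ∧
      Filter.Tendsto a Filter.atTop (nhds 0) :=
  picard_bound_summable_general η p q C hη hC hpq κ hκ hsmall a ha
end

section
/- Let g_{ρ,τ,Λ} be the generalized Gaussian kernel on ℝ₊ × ℝ^d, and let 0 < p < 1 + ρ/(τd). Then for every T > 0, ∫₀^T ∫_{ℝ^d} g_{ρ,τ,Λ}(t,x)^p dx dt < ∞. -/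
/-!
Raising the kernel to the power `p` multiplies the exponent `-Λ|x|^ρ/t^τ` by `p`, which is the
same as passing to the time `s = t p^{-1/τ}`; so `g(t,·)^p` is a constant multiple of the
probability density `g(s,·)`, and `∫ g(t,x)^p dx = K^{p-1} p^{-d/ρ} t^{(1-p)τd/ρ}`.
The condition `p < 1 + ρ/(τd)` is exactly `(1-p)τd/ρ > -1`, i.e. integrability at `t = 0`.
-/

open MeasureTheory Real

theorem neg_one_lt_one_sub_mul_of_lt_one_add_inv {a p : ℝ} (ha : 0 ≤ a) (hp : p < 1 + a⁻¹) :
    -1 < (1 - p) * a := by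
  rcases ha.eq_or_lt with rfl | ha
  · simp
  · have : (p - 1) * a < 1 := by
      rw [← lt_div_iff₀ ha, one_div]; linarith
    linarith

namespace GeneralizedGaussian

variable {E : Type*} [Norm E]

noncomputable def kernel (d ρ τ Λ K t : ℝ) (x : E) : ℝ :=
  K * t ^ (-(τ * d / ρ)) * exp (-Λ * ‖x‖ ^ ρ / t ^ τ)

theorem kernel_rpow_eq_mul_kernel {d ρ τ Λ K t p : ℝ} (hτ : τ ≠ 0) (hK : 0 < K) (ht : 0 < t)
    (hp : 0 < p) (x : E) :
    kernel d ρ τ Λ K t x ^ p =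
      K ^ (p - 1) * p ^ (-(d / ρ)) * t ^ ((1 - p) * (τ * d / ρ)) *
        kernel d ρ τ Λ K (t * p ^ (-1 / τ)) x := by
  have hp_rpow : 0 ≤ p ^ (-1 / τ) := rpow_nonneg hp.le _
  have hs_τ : (t * p ^ (-1 / τ)) ^ τ = t ^ τ / p := by
    rw [mul_rpow ht.le hp_rpow, ← rpow_mul hp.le, div_mul_cancel₀ _ hτ, rpow_neg_one,
      div_eq_mul_inv]
  have hs_a : (t * p ^ (-1 / τ)) ^ (-(τ * d / ρ)) = t ^ (-(τ * d / ρ)) * p ^ (d / ρ) := by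
    rw [mul_rpow ht.le hp_rpow, ← rpow_mul hp.le]
    congr 2
    field_simp
  have hexp : exp (-Λ * ‖x‖ ^ ρ / t ^ τ) ^ p = exp (-Λ * ‖x‖ ^ ρ / (t ^ τ / p)) := by
    rw [← exp_mul]
    congr 1
    field_simp
  unfold kernel
  rw [hs_τ, hs_a, mul_rpow (by positivity) (exp_nonneg _), mul_rpow hK.le (by positivity), hexp,
    ← rpow_mul ht.le, rpow_neg hp.le, rpow_sub_one hK.ne',
    show -(τ * d / ρ) * p = (1 - p) * (τ * d / ρ) + -(τ * d / ρ) by ring, rpow_add ht]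
  field_simp

theorem lintegral_ofReal_kernel_rpow [MeasurableSpace E] {μ : Measure E}
    {d ρ τ Λ K t p : ℝ} (hτ : τ ≠ 0) (hK : 0 < K) (ht : 0 < t) (hp : 0 < p)
    (hnorm : ∀ s, 0 < s → ∫ x, kernel d ρ τ Λ K s x ∂μ = 1) :
    ∫⁻ x, ENNReal.ofReal (kernel d ρ τ Λ K t x ^ p) ∂μ =
      ENNReal.ofReal (K ^ (p - 1) * p ^ (-(d / ρ)) * t ^ ((1 - p) * (τ * d / ρ))) := by
  set s := t * p ^ (-1 / τ)
  have hs : 0 < s := by positivity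
  have hmass : ∫⁻ x, ENNReal.ofReal (kernel d ρ τ Λ K s x) ∂μ = 1 := by
    rw [← ofReal_integral_eq_lintegral_ofReal
      (Integrable.of_integral_ne_zero (by simp [hnorm s hs]))
      (ae_of_all _ fun x => by unfold kernel; positivity), hnorm s hs, ENNReal.ofReal_one]
  have hC : 0 ≤ K ^ (p - 1) * p ^ (-(d / ρ)) * t ^ ((1 - p) * (τ * d / ρ)) := by positivity
  simp_rw [kernel_rpow_eq_mul_kernel hτ hK ht hp, ENNReal.ofReal_mul hC]
  rw [lintegral_const_mul' _ _ ENNReal.ofReal_ne_top, hmass, mul_one]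

end GeneralizedGaussian

theorem generalized_gaussian_power_integrable_general (d : ℕ)
    (ρ τ Λ K : ℝ) (hρ : 0 < ρ) (hτ : 0 < τ) (hK : 0 < K)
    (hKnorm : ∀ t : ℝ, 0 < t →
      ∫ x : EuclideanSpace ℝ (Fin d),
        K * t ^ (-(τ * d / ρ)) * exp (-Λ * ‖x‖ ^ ρ / t ^ τ) = 1)
    (g : ℝ → EuclideanSpace ℝ (Fin d) → ℝ)
    (hg : ∀ t x, g t x = if 0 < t then K * t ^ (-(τ * d / ρ)) * exp (-Λ * ‖x‖ ^ ρ / t ^ τ)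
      else 0)
    (p : ℝ) (hp : 0 < p) (hp' : p < 1 + ρ / (τ * d)) (T : ℝ) :
    ∫⁻ t in Set.Ioc (0 : ℝ) T, ∫⁻ x : EuclideanSpace ℝ (Fin d),
      ENNReal.ofReal (g t x ^ p) < ⊤ := by
  have hexp : -1 < (1 - p) * (τ * d / ρ) :=
    neg_one_lt_one_sub_mul_of_lt_one_add_inv (by positivity) (by rwa [inv_div])
  have hinner : ∀ t ∈ Set.Ioc (0 : ℝ) T, ∫⁻ x, ENNReal.ofReal (g t x ^ p) =
      ENNReal.ofReal (K ^ (p - 1) * p ^ (-(d / ρ)) * t ^ ((1 - p) * (τ * d / ρ))) := by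
    intro t ht
    simp only [hg, if_pos ht.1]
    exact GeneralizedGaussian.lintegral_ofReal_kernel_rpow hτ.ne' hK ht.1 hp hKnorm
  rw [setLIntegral_congr_fun measurableSet_Ioc hinner]
  exact ((intervalIntegral.intervalIntegrable_rpow' hexp).1.const_mul _).lintegral_lt_top

/-- For `0 < p < 1 + ρ/(τd)`, the `p`-th power of the generalized Gaussian kernel
`g_{ρ,τ,Λ}` is integrable over `[0,T] × ℝ^d`. -/
theorem generalized_gaussian_power_integrable (d : ℕ) (hd : 1 ≤ d)
    (ρ τ Λ K : ℝ) (hρ : 0 < ρ) (hτ : 0 < τ) (hΛ : 0 < Λ) (hK : 0 < K)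
    (hKnorm : ∀ t : ℝ, 0 < t →
      ∫ x : EuclideanSpace ℝ (Fin d),
        K * t ^ (-(τ * d / ρ)) * exp (-Λ * ‖x‖ ^ ρ / t ^ τ) = 1)
    (g : ℝ → EuclideanSpace ℝ (Fin d) → ℝ)
    (hg : ∀ t x, g t x = if 0 < t then K * t ^ (-(τ * d / ρ)) * exp (-Λ * ‖x‖ ^ ρ / t ^ τ)
      else 0)
    (p : ℝ) (hp : 0 < p) (hp' : p < 1 + ρ / (τ * d)) (T : ℝ) (hT : 0 < T) :
    ∫⁻ t in Set.Ioc (0 : ℝ) T, ∫⁻ x : EuclideanSpace ℝ (Fin d),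
      ENNReal.ofReal (g t x ^ p) < ⊤ :=
  generalized_gaussian_power_integrable_general d ρ τ Λ K hρ hτ hK hKnorm g hg p hp hp' T
end
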